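/- arXiv:1506.01912 — 5 statements merged into one kernel-verified Lean document; each statement's English description precedes it below -/
import Mathlib

section
/- Let 0 ≤ t and h > 0 with t + h ≤ T, let z ∈ ℝ^d, and let R, P > 0 be such that ‖v‖ ≤ P whenever s ∈ [0,T], dist(y, X₀) ≤ R and v ∈ F(s,y). Let x : [t, t+h] → ℝ^d be such that there is an integrable w : (t, t+h) → ℝ^d with x(s) = x(t) + ∫_t^s w(θ) dθ for all s ∈ [t, t+h], w(s) ∈ F(s, x(s)) for almost every s ∈ (t, t+h), and dist(x(s), X₀) ≤ R for all s ∈ [t, t+h]. Then there exists v ∈ F(t,z) such that ‖x(t+h) − (z + h·v)‖ ≤ (1 + Lh)·‖x(t) − z‖ + L(P+1)·h². -/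
open MeasureTheory Metric Set Filter
open scoped RealInnerProductSpace

noncomputable section

/-- Euclidean space `ℝ^d`. -/
abbrev Euc (d : ℕ) : Type := EuclideanSpace ℝ (Fin d)

/-- `x` solves the differential inclusion `ẋ ∈ F(t,x)` on `[0,τ]`
with integrable derivative `v`. -/
def SolOn {d : ℕ} (F : ℝ → Euc d → Set (Euc d)) (τ : ℝ) (x v : ℝ → Euc d) : Prop :=
  IntegrableOn v (Ioo (0:ℝ) τ) ∧
  (∀ t ∈ Icc (0:ℝ) τ, x t = x 0 + ∫ s in (0:ℝ)..t, v s) ∧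
  (∀ᵐ s ∂(volume.restrict (Ioo (0:ℝ) τ)), v s ∈ F s (x s))

/-- the unconstrained solution set `S^u(τ)`. -/
def Su {d : ℕ} (F : ℝ → Euc d → Set (Euc d)) (X₀ : Set (Euc d)) (τ : ℝ) :
    Set (ℝ → Euc d) :=
  {x | x 0 ∈ X₀ ∧ ∃ v, SolOn F τ x v}

/-- the constrained solution set `S^c(τ)`. -/
def Sc {d : ℕ} (F : ℝ → Euc d → Set (Euc d)) (A : ℝ → Set (Euc d)) (X₀ : Set (Euc d))
    (τ : ℝ) : Set (ℝ → Euc d) :=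
  {x | x ∈ Su F X₀ τ ∧ ∀ t ∈ Icc (0:ℝ) τ, x t ∈ A t}

/-- the solution set `S^u_N(ν,β,δ)` of the (inflated, relaxed) Euler scheme. -/
def SuN {d : ℕ} (F : ℝ → Euc d → Set (Euc d)) (X₀ : Set (Euc d)) (T : ℝ) (N ν : ℕ)
    (β δ : ℝ) : Set (ℕ → Euc d) :=
  {y | infDist (y 0) X₀ ≤ δ ∧
    ∀ n < ν, ∃ v ∈ F ((n : ℝ) * (T / N)) (y n),
      ‖y (n + 1) - (y n + (T / N) • v)‖ ≤ β}

/-- the constrained solution set `S^c_N(ν,β,δ)` of the Euler scheme. -/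
def ScN {d : ℕ} (F : ℝ → Euc d → Set (Euc d)) (A : ℝ → Set (Euc d)) (X₀ : Set (Euc d))
    (T : ℝ) (N ν : ℕ) (β δ : ℝ) : Set (ℕ → Euc d) :=
  {y | y ∈ SuN F X₀ T N ν β δ ∧
    ∀ n ≤ ν, infDist (y n) (A ((n : ℝ) * (T / N))) ≤ δ}

/-- `M = sup {‖v‖ : x ∈ X₀, v ∈ F(0,x)}`. -/
def Mconst {d : ℕ} (F : ℝ → Euc d → Set (Euc d)) (X₀ : Set (Euc d)) : ℝ :=
  sSup {r : ℝ | ∃ x ∈ X₀, ∃ v ∈ F 0 x, r = ‖v‖}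

/-- distance of a point of `ℝ × ℝ^d × ℝ^d` (with norm `|r| + ‖x‖ + ‖v‖`) to the
graph `{(s,x,v) : s ∈ [0,T], v ∈ F(s,x)}` of `F`. -/
def graphDist {d : ℕ} (F : ℝ → Euc d → Set (Euc d)) (T : ℝ)
    (p : ℝ × Euc d × Euc d) : ℝ :=
  sInf {r : ℝ | ∃ s ∈ Icc (0:ℝ) T, ∃ x, ∃ v ∈ F s x,
    r = |p.1 - s| + ‖p.2.1 - x‖ + ‖p.2.2 - v‖}

/-- `τ* = sup {τ ∈ (0,T] : S^c(τ) ≠ ∅}`. -/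
def tauStar {d : ℕ} (F : ℝ → Euc d → Set (Euc d)) (A : ℝ → Set (Euc d))
    (X₀ : Set (Euc d)) (T : ℝ) : ℝ :=
  sSup {τ : ℝ | 0 < τ ∧ τ ≤ T ∧ (Sc F A X₀ τ).Nonempty}

/-!
Write `x(t+h) = x(t) + h • ū` with `ū` the mean of `w` over `(t, t+h]`; it suffices to find
`v ∈ F(t,z)` with `‖ū - v‖ ≤ ε := L‖x(t) - z‖ + L(P+1)h`. Since `‖w‖ ≤ P`, the trajectory stays
within `Ph` of `x(t)`, so by the Lipschitz bound almost every `w(s) ∈ F(s, x(s))` lies in the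
closed `ε`-thickening of `F(t,z)`. That thickening is closed and convex, hence contains the mean
`ū`, and compactness of `F(t,z)` provides the point `v`.
-/

theorem Metric.subset_cthickening_of_hausdorffDist_le {α : Type*} [PseudoMetricSpace α]
    {s t : Set α} {δ : ℝ} (hs : s.Nonempty) (ht : t.Nonempty) (hsb : Bornology.IsBounded s)
    (htb : Bornology.IsBounded t) (hδ : hausdorffDist s t ≤ δ) :
    s ⊆ cthickening δ t := fun a ha ↦ by
  have hfin := hausdorffEDist_ne_top_of_nonempty_of_bounded hs ht hsb htb
  rw [mem_cthickening_iff]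
  calc infEDist a t ≤ hausdorffEDist s t :=
        infEDist_le_hausdorffEDist_of_mem ha
    _ = ENNReal.ofReal (hausdorffDist s t) := (ENNReal.ofReal_toReal hfin).symm
    _ ≤ ENNReal.ofReal δ := ENNReal.ofReal_le_ofReal hδ

section IntervalIntegral

variable {E : Type*} [NormedAddCommGroup E] [NormedSpace ℝ E] {f : ℝ → E} {a b : ℝ}

theorem norm_sub_le_of_eq_add_intervalIntegral {x : ℝ → E} {C : ℝ} (hC : 0 ≤ C)
    (hx : ∀ c ∈ Icc a b, x c = x a + ∫ θ in a..c, f θ)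
    (hf : ∀ᵐ θ ∂volume.restrict (Ioc a b), ‖f θ‖ ≤ C) {c : ℝ} (hc : c ∈ Icc a b) :
    ‖x c - x a‖ ≤ C * (b - a) := by
  have hfc : ∀ᵐ θ, θ ∈ uIoc a c → ‖f θ‖ ≤ C := by
    rw [uIoc_of_le hc.1]
    refine (ae_restrict_iff' measurableSet_Ioc).1 (ae_restrict_of_ae_restrict_of_subset ?_ hf)
    exact Ioc_subset_Ioc_right hc.2
  calc ‖x c - x a‖ = ‖∫ θ in a..c, f θ‖ := by rw [hx c hc, add_sub_cancel_left]
    _ ≤ C * |c - a| := intervalIntegral.norm_integral_le_of_norm_le_const_ae hfc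
    _ ≤ C * (b - a) := by
        gcongr
        rw [abs_of_nonneg (sub_nonneg.2 hc.1)]
        linarith [hc.2]

theorem Convex.interval_average_mem [CompleteSpace E] {s : Set E} (hs : Convex ℝ s)
    (hsc : IsClosed s) (hab : a < b) (hf : ∀ᵐ θ ∂volume.restrict (Ioc a b), f θ ∈ s)
    (hfi : IntegrableOn f (Ioc a b)) : (⨍ θ in a..b, f θ) ∈ s := by
  rw [uIoc_of_le hab.le]
  exact hs.set_average_mem hsc (by simp [hab]) (by simp) hf hfi

theorem intervalIntegral_eq_smul_interval_average (hab : a < b) :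
    ∫ θ in a..b, f θ = (b - a) • ⨍ θ in a..b, f θ := by
  rw [interval_average_eq, smul_smul, mul_inv_cancel₀ (sub_pos.2 hab).ne', one_smul]

end IntervalIntegral

theorem IsCompact.exists_norm_add_smul_sub_add_smul_le {E : Type*} [NormedAddCommGroup E]
    [NormedSpace ℝ E] {K : Set E} (hK : IsCompact K) {ε h : ℝ} (hε : 0 ≤ ε) (hh : 0 ≤ h) {u : E}
    (hu : u ∈ cthickening ε K) (x z : E) :
    ∃ v ∈ K, ‖(x + h • u) - (z + h • v)‖ ≤ ‖x - z‖ + h * ε := by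
  rw [hK.cthickening_eq_biUnion_closedBall hε] at hu
  obtain ⟨v, hv, huv⟩ := mem_iUnion₂.1 hu
  refine ⟨v, hv, ?_⟩
  calc ‖(x + h • u) - (z + h • v)‖ = ‖(x - z) + h • (u - v)‖ := by
        rw [smul_sub]; congr 1; abel
    _ ≤ ‖x - z‖ + h * ε := by
        grw [norm_add_le, norm_smul, Real.norm_of_nonneg hh, mem_closedBall_iff_norm.1 huv]

theorem statement_3_general
    (d : ℕ) (T L : ℝ) (hL : 0 < L)
    (F : ℝ → Euc d → Set (Euc d))
    (hFne : ∀ t ∈ Icc (0:ℝ) T, ∀ x : Euc d, (F t x).Nonempty)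
    (hFcvx : ∀ t ∈ Icc (0:ℝ) T, ∀ x : Euc d, Convex ℝ (F t x))
    (hFcpt : ∀ t ∈ Icc (0:ℝ) T, ∀ x : Euc d, IsCompact (F t x))
    (hFlip : ∀ t ∈ Icc (0:ℝ) T, ∀ t' ∈ Icc (0:ℝ) T, ∀ x x' : Euc d,
      hausdorffDist (F t x) (F t' x') ≤ L * |t - t'| + L * ‖x - x'‖)
    (X₀ : Set (Euc d))
    (t h : ℝ) (ht : 0 ≤ t) (hh : 0 < h) (hth : t + h ≤ T) (z : Euc d)
    (R P : ℝ) (hP : 0 < P)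
    (hPbd : ∀ s ∈ Icc (0:ℝ) T, ∀ y : Euc d, infDist y X₀ ≤ R →
      ∀ v ∈ F s y, ‖v‖ ≤ P)
    (x w : ℝ → Euc d)
    (hw : IntegrableOn w (Ioo t (t + h)))
    (hx : ∀ s ∈ Icc t (t + h), x s = x t + ∫ θ in t..s, w θ)
    (hwF : ∀ᵐ s ∂(volume.restrict (Ioo t (t + h))), w s ∈ F s (x s))
    (hxR : ∀ s ∈ Icc t (t + h), infDist (x s) X₀ ≤ R) :
    ∃ v ∈ F t z,
      ‖x (t + h) - (z + h • v)‖ ≤ (1 + L * h) * ‖x t - z‖ + L * (P + 1) * h ^ 2 := by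
  have htT : t ∈ Icc (0:ℝ) T := ⟨ht, by linarith⟩
  have hIocT : ∀ s ∈ Ioc t (t + h), s ∈ Icc (0:ℝ) T := fun s hs ↦
    ⟨by linarith [hs.1], by linarith [hs.2]⟩
  have hwF' : ∀ᵐ s ∂volume.restrict (Ioc t (t + h)), w s ∈ F s (x s) := by
    rwa [Measure.restrict_congr_set Ioo_ae_eq_Ioc.symm]
  have hwP : ∀ᵐ s ∂volume.restrict (Ioc t (t + h)), ‖w s‖ ≤ P := by
    filter_upwards [hwF', ae_restrict_mem measurableSet_Ioc] with s hs hsI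
    exact hPbd s (hIocT s hsI) (x s) (hxR s (Ioc_subset_Icc_self hsI)) _ hs
  have hdrift (s : ℝ) (hs : s ∈ Icc t (t + h)) : ‖x s - x t‖ ≤ P * h := by
    simpa using norm_sub_le_of_eq_add_intervalIntegral hP.le hx hwP hs
  set ε := L * ‖x t - z‖ + L * (P + 1) * h
  have hwε : ∀ᵐ s ∂volume.restrict (Ioc t (t + h)), w s ∈ cthickening ε (F t z) := by
    filter_upwards [hwF', ae_restrict_mem measurableSet_Ioc] with s hs hsI
    have hsT := hIocT s hsI
    refine subset_cthickening_of_hausdorffDist_le (hFne s hsT _) (hFne t htT z)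
      (hFcpt s hsT _).isBounded (hFcpt t htT z).isBounded ?_ hs
    calc hausdorffDist (F s (x s)) (F t z) ≤ L * |s - t| + L * ‖x s - z‖ :=
          hFlip s hsT t htT _ _
      _ ≤ L * h + L * (P * h + ‖x t - z‖) := by
          gcongr
          · rw [abs_of_pos (sub_pos.2 hsI.1)]; linarith [hsI.2]
          · linarith [norm_sub_le_norm_sub_add_norm_sub (x s) (x t) z,
              hdrift s (Ioc_subset_Icc_self hsI)]
      _ = ε := by ring
  have havg : (⨍ θ in t..t + h, w θ) ∈ cthickening ε (F t z) :=
    ((hFcvx t htT z).cthickening ε).interval_average_mem isClosed_cthickening (by linarith) hwε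
      (hw.congr_set_ae Ioo_ae_eq_Ioc.symm)
  have hend : x (t + h) = x t + h • ⨍ θ in t..t + h, w θ := by
    rw [hx _ ⟨by linarith, le_rfl⟩, intervalIntegral_eq_smul_interval_average (by linarith),
      add_sub_cancel_left]
  obtain ⟨v, hv, hvε⟩ := (hFcpt t htT z).exists_norm_add_smul_sub_add_smul_le (by positivity)
    hh.le havg (x t) z
  exact ⟨v, hv, hend ▸ hvε.trans_eq (by ring)⟩

theorem statement_3
    (d : ℕ) (hd : 1 ≤ d) (T L : ℝ) (hT : 0 < T) (hL : 0 < L)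
    (F : ℝ → Euc d → Set (Euc d))
    (hFne : ∀ t ∈ Icc (0:ℝ) T, ∀ x : Euc d, (F t x).Nonempty)
    (hFcvx : ∀ t ∈ Icc (0:ℝ) T, ∀ x : Euc d, Convex ℝ (F t x))
    (hFcpt : ∀ t ∈ Icc (0:ℝ) T, ∀ x : Euc d, IsCompact (F t x))
    (hFlip : ∀ t ∈ Icc (0:ℝ) T, ∀ t' ∈ Icc (0:ℝ) T, ∀ x x' : Euc d,
      hausdorffDist (F t x) (F t' x') ≤ L * |t - t'| + L * ‖x - x'‖)
    (X₀ : Set (Euc d)) (hX₀ne : X₀.Nonempty) (hX₀cpt : IsCompact X₀)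
    (t h : ℝ) (ht : 0 ≤ t) (hh : 0 < h) (hth : t + h ≤ T) (z : Euc d)
    (R P : ℝ) (hR : 0 < R) (hP : 0 < P)
    (hPbd : ∀ s ∈ Icc (0:ℝ) T, ∀ y : Euc d, infDist y X₀ ≤ R →
      ∀ v ∈ F s y, ‖v‖ ≤ P)
    (x w : ℝ → Euc d)
    (hw : IntegrableOn w (Ioo t (t + h)))
    (hx : ∀ s ∈ Icc t (t + h), x s = x t + ∫ θ in t..s, w θ)
    (hwF : ∀ᵐ s ∂(volume.restrict (Ioo t (t + h))), w s ∈ F s (x s))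
    (hxR : ∀ s ∈ Icc t (t + h), infDist (x s) X₀ ≤ R) :
    ∃ v ∈ F t z,
      ‖x (t + h) - (z + h • v)‖ ≤ (1 + L * h) * ‖x t - z‖ + L * (P + 1) * h ^ 2 :=
  statement_3_general d T L hL F hFne hFcvx hFcpt hFlip X₀ t h ht hh hth z R P hP hPbd x w hw hx hwF
    hxR
end
end

section
/- The supremum τ* is attained as a maximum: τ* ∈ (0,T] and S^c(τ*) ≠ ∅. -/
open MeasureTheory Metric Set Filter
open scoped RealInnerProductSpace

noncomputable section

/-!
Take times `τₙ ∈ (0, T]` increasing to `τ*` and constrained solutions `xₙ` on `[0, τₙ]`.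
Grönwall's inequality bounds their velocities uniformly, so the `xₙ` (extended by constants past
`τₙ`) are uniformly Lipschitz and have a Lipschitz pointwise limit `x` along an ultrafilter;
`x(0) ∈ X₀`, and the sequential closedness of the graph of `A` gives `x(t) ∈ A(t)` on `[0, τ*]`.
A Lipschitz function is the integral of its derivative, so it remains to check
`ẋ(s) ∈ F(s, x(s))` wherever `x` is differentiable. The difference quotients of `xₙ` over
`[s, s + r]` are averages of velocities lying within `O(r) + O(‖xₙ(s) - x(s)‖)` of the convex
compact set `F(s, x(s))`; letting first `n → ∞` and then `r → 0` puts `ẋ(s)` in that set.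
-/

open Topology
open scoped NNReal

theorem Metric.mem_cthickening_iff_infDist_le {α : Type*} [PseudoMetricSpace α] {s : Set α}
    {x : α} {δ : ℝ} (hs : s.Nonempty) (hδ : 0 ≤ δ) :
    x ∈ cthickening δ s ↔ infDist x s ≤ δ := by
  rw [mem_cthickening_iff, infDist, ENNReal.le_ofReal_iff_toReal_le (infEDist_ne_top hs) hδ]

theorem ae_mem_uIoc_of_ae_restrict_Ioo {P : ℝ → Prop} {τ a b : ℝ}
    (h : ∀ᵐ s ∂volume.restrict (Ioo 0 τ), P s) (ha : a ∈ Icc 0 τ) (hb : b ∈ Icc 0 τ) :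
    ∀ᵐ s, s ∈ uIoc a b → P s := by
  rw [Measure.restrict_congr_set Ioo_ae_eq_Ioc, ae_restrict_iff' measurableSet_Ioc] at h
  filter_upwards [h] with s hs hsab
  refine hs ?_
  rcases mem_uIoc.1 hsab with hsab | hsab
  · exact ⟨ha.1.trans_lt hsab.1, hsab.2.trans hb.2⟩
  · exact ⟨hb.1.trans_lt hsab.1, hsab.2.trans ha.2⟩

theorem le_gronwallBound_of_le_integral {u : ℝ → ℝ} {C L τ : ℝ} (hL : 0 ≤ L)
    (hu : ContinuousOn u (Icc 0 τ))
    (h : ∀ t ∈ Icc 0 τ, u t ≤ ∫ s in (0:ℝ)..t, (C + L * u s)) :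
    ∀ t ∈ Icc 0 τ, u t ≤ gronwallBound 0 L C t := by
  rcases lt_or_ge τ 0 with hτ | hτ
  · simp [Icc_eq_empty_of_lt hτ]
  obtain ⟨ũ, hũ, hũu⟩ : ∃ ũ : ℝ → ℝ, Continuous ũ ∧ EqOn ũ u (Icc 0 τ) :=
    ⟨IccExtend hτ ((Icc 0 τ).domRestrict u),
      (continuousOn_iff_continuous_domRestrict.1 hu).Icc_extend',
      fun t ht => IccExtend_of_mem hτ _ ht⟩
  set W : ℝ → ℝ := fun t => ∫ s in (0:ℝ)..t, (C + L * ũ s)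
  have hW : ∀ t, HasDerivAt W (C + L * ũ t) t := fun t =>
    ((continuous_const.add (continuous_const.mul hũ)).integral_hasStrictDerivAt 0 t).hasDerivAt
  have huW : ∀ t ∈ Icc 0 τ, u t ≤ W t := fun t ht => (h t ht).trans_eq <|
    intervalIntegral.integral_congr fun s hs => by
      rw [uIcc_of_le ht.1] at hs
      simp only [hũu ⟨hs.1, hs.2.trans ht.2⟩]
  have hWle := le_gronwallBound_of_liminf_deriv_right_le (f := W) (K := L) (ε := C) (b := τ)
    (continuous_iff_continuousAt.2 fun t => (hW t).continuousAt).continuousOn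
    (fun t _ r hr => (hW t).hasDerivWithinAt.liminf_right_slope_le hr)
    intervalIntegral.integral_same.le
    (fun t ht => by
      rw [hũu ⟨ht.1, ht.2.le⟩]
      linarith [mul_le_mul_of_nonneg_left (huW t ⟨ht.1, ht.2.le⟩) hL])
  intro t ht
  simpa using (huW t ht).trans (hWle t ht)

section LipschitzFunctions

variable {E : Type*} [NormedAddCommGroup E] [NormedSpace ℝ E] [FiniteDimensional ℝ E]
  {K : ℝ≥0} {f : ℝ → E}

theorem LipschitzWith.intervalIntegrable_deriv (hf : LipschitzWith K f) (a b : ℝ) :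
    IntervalIntegrable (deriv f) volume a b :=
  (intervalIntegrable_const (c := (K : ℝ))).mono_fun
    (stronglyMeasurable_deriv f).aestronglyMeasurable
    (ae_of_all _ fun _ => (norm_deriv_le_of_lipschitz hf).trans (le_abs_self _))

theorem LipschitzWith.integral_deriv_eq_sub (hf : LipschitzWith K f) (a b : ℝ) :
    ∫ t in a..b, deriv f t = f b - f a := by
  refine (SeparatingDual.eq_iff_forall_dual_eq (R := ℝ)).2 fun g => ?_
  have hgf : LipschitzWith (‖g‖₊ * K) (g ∘ f) := g.lipschitz.comp hf
  rw [← g.intervalIntegral_comp_comm (hf.intervalIntegrable_deriv a b), map_sub,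
    show g (f b) - g (f a) = (g ∘ f) b - (g ∘ f) a from rfl,
    ← (hgf.lipschitzOnWith (s := uIcc a b)).absolutelyContinuousOnInterval.integral_deriv_eq_sub]
  refine intervalIntegral.integral_congr_ae ?_
  filter_upwards [hf.ae_differentiableAt_real] with t ht _
  exact ((g.hasFDerivAt.comp_hasDerivAt t ht.hasDerivAt).deriv).symm

end LipschitzFunctions

theorem LipschitzOnWith.lipschitzWith_comp_clamp {E : Type*} [PseudoMetricSpace E] {K : ℝ≥0}
    {f : ℝ → E} {a b : ℝ} (hf : LipschitzOnWith K f (Icc a b)) (hab : a ≤ b) :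
    LipschitzWith K fun t => f (max a (min b t)) := by
  have := hf.to_restrict.comp (LipschitzWith.projIcc hab)
  rwa [mul_one] at this

theorem exists_lipschitzWith_tendsto_ultrafilter {ι α E : Type*} [PseudoMetricSpace α]
    [MetricSpace E] [ProperSpace E] {K : ℝ≥0} (U : Ultrafilter ι) {f : ι → α → E}
    (hf : ∀ i, LipschitzWith K (f i)) (a : α)
    (ha : Bornology.IsBounded (range fun i => f i a)) :
    ∃ g : α → E, LipschitzWith K g ∧ ∀ t, Tendsto (fun i => f i t) U (𝓝 (g t)) := by
  have hlim : ∀ t, ∃ p, Tendsto (fun i => f i t) U (𝓝 p) := fun t => by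
    have hsub : range (fun i => f i t) ⊆ cthickening (K * dist t a) (range fun i => f i a) := by
      rintro _ ⟨i, rfl⟩
      exact mem_cthickening_of_dist_le _ _ _ _ ⟨i, rfl⟩ ((hf i).dist_le_mul t a)
    obtain ⟨p, -, hp⟩ := (ha.cthickening.subset hsub).isCompact_closure.ultrafilter_le_nhds
      (U.map fun i => f i t) (le_principal_iff.2 <| mem_map.2 <|
        univ_mem' fun i => subset_closure (mem_range_self i))
    exact ⟨p, hp⟩
  choose g hg using hlim
  exact ⟨g, LipschitzWith.of_dist_le_mul fun t t' =>
    le_of_tendsto ((hg t).dist (hg t')) (Eventually.of_forall fun i => (hf i).dist_le_mul t t'),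
    hg⟩

theorem Ultrafilter.exists_subseq_tendsto {X : Type*} [TopologicalSpace X] {U : Ultrafilter ℕ}
    (hU : (U : Filter ℕ) ≤ atTop) {u : ℕ → X} {x : X} [(𝓝 x).IsCountablyGenerated]
    (h : Tendsto u U (𝓝 x)) : ∃ φ : ℕ → ℕ, StrictMono φ ∧ Tendsto (u ∘ φ) atTop (𝓝 x) :=
  subseq_tendsto_of_neBot <| (U.map u).neBot.mono (le_inf h (map_mono hU))

structure IsLipschitzCompactValued {E : Type*} [NormedAddCommGroup E] (F : ℝ → E → Set E)
    (T L : ℝ) : Prop where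
  nonempty : ∀ t ∈ Icc (0:ℝ) T, ∀ x, (F t x).Nonempty
  isCompact : ∀ t ∈ Icc (0:ℝ) T, ∀ x, IsCompact (F t x)
  hausdorffDist_le : ∀ t ∈ Icc (0:ℝ) T, ∀ t' ∈ Icc (0:ℝ) T, ∀ x x',
    hausdorffDist (F t x) (F t' x') ≤ L * |t - t'| + L * ‖x - x'‖

namespace IsLipschitzCompactValued

variable {E : Type*} [NormedAddCommGroup E] {F : ℝ → E → Set E} {T L t t' : ℝ} {x x' v : E}

theorem infDist_le (hF : IsLipschitzCompactValued F T L) (ht : t ∈ Icc 0 T)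
    (ht' : t' ∈ Icc 0 T) (hv : v ∈ F t x) :
    infDist v (F t' x') ≤ L * |t - t'| + L * ‖x - x'‖ :=
  (infDist_le_hausdorffDist_of_mem hv <| hausdorffEDist_ne_top_of_nonempty_of_bounded
    (hF.nonempty t ht x) (hF.nonempty t' ht' x') (hF.isCompact t ht x).isBounded
    (hF.isCompact t' ht' x').isBounded).trans (hF.hausdorffDist_le t ht t' ht' x x')

theorem norm_le (hF : IsLipschitzCompactValued F T L) (ht : t ∈ Icc 0 T) (ht' : t' ∈ Icc 0 T)
    (hv : v ∈ F t x) {C₀ : ℝ} (hC₀ : ∀ w ∈ F t' x', ‖w‖ ≤ C₀) :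
    ‖v‖ ≤ C₀ + (L * |t - t'| + L * ‖x - x'‖) := by
  obtain ⟨w, hw, hvw⟩ :=
    (hF.isCompact t' ht' x').exists_infDist_eq_dist (hF.nonempty t' ht' x') v
  calc ‖v‖ ≤ ‖w‖ + dist v w := by rw [dist_eq_norm]; exact norm_le_norm_add_norm_sub' v w
    _ ≤ _ := add_le_add (hC₀ w hw) (hvw ▸ hF.infDist_le ht ht' hv)

end IsLipschitzCompactValued

namespace SolOn

variable {d : ℕ} {F : ℝ → Euc d → Set (Euc d)} {τ a b : ℝ} {x v : ℝ → Euc d}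

theorem intervalIntegrable (h : SolOn F τ x v) (ha : a ∈ Icc 0 τ) (hb : b ∈ Icc 0 τ) :
    IntervalIntegrable v volume a b := by
  have hv := h.1
  rw [← integrableOn_Ioc_iff_integrableOn_Ioo] at hv
  refine intervalIntegrable_iff.2 <| hv.mono_set fun s hs => ?_
  rcases mem_uIoc.1 hs with hs | hs
  · exact ⟨ha.1.trans_lt hs.1, hs.2.trans hb.2⟩
  · exact ⟨hb.1.trans_lt hs.1, hs.2.trans ha.2⟩

theorem sub_eq_integral (h : SolOn F τ x v) (ha : a ∈ Icc 0 τ) (hb : b ∈ Icc 0 τ) :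
    x b - x a = ∫ s in a..b, v s := by
  have h0 : (0:ℝ) ∈ Icc 0 τ := ⟨le_rfl, ha.1.trans ha.2⟩
  rw [h.2.1 b hb, h.2.1 a ha, add_sub_add_left_eq_sub,
    intervalIntegral.integral_interval_sub_left (h.intervalIntegrable h0 hb)
      (h.intervalIntegrable h0 ha)]

theorem continuousOn (h : SolOn F τ x v) : ContinuousOn x (Icc 0 τ) := by
  rcases lt_or_ge τ 0 with hτ | hτ
  · simp [Icc_eq_empty_of_lt hτ]
  have hv : IntegrableOn v (uIcc 0 τ) := by
    rw [uIcc_of_le hτ, integrableOn_Icc_iff_integrableOn_Ioo]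
    exact h.1
  have hprim := intervalIntegral.continuousOn_primitive_interval hv
  rw [uIcc_of_le hτ] at hprim
  exact (continuousOn_const.add hprim).congr h.2.1

theorem lipschitzOnWith_of_ae_norm_le (h : SolOn F τ x v) {K : ℝ≥0}
    (hK : ∀ᵐ s ∂volume.restrict (Ioo 0 τ), ‖v s‖ ≤ K) : LipschitzOnWith K x (Icc 0 τ) :=
  LipschitzOnWith.of_dist_le_mul fun b hb a ha => by
    rw [dist_eq_norm, h.sub_eq_integral ha hb, Real.dist_eq]
    exact intervalIntegral.norm_integral_le_of_norm_le_const_ae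
      (ae_mem_uIoc_of_ae_restrict_Ioo hK ha hb)

end SolOn

section Solutions

variable {d : ℕ} {F : ℝ → Euc d → Set (Euc d)} {T L : ℝ}

theorem IsLipschitzCompactValued.exists_lipschitzOnWith (hF : IsLipschitzCompactValued F T L)
    (hL : 0 ≤ L) (hT : 0 ≤ T) (x₀ : Euc d) {R₀ : ℝ} (hR₀ : 0 ≤ R₀) :
    ∃ K : ℝ≥0, ∀ τ ≤ T, ∀ x v, SolOn F τ x v →
      ‖x 0 - x₀‖ ≤ R₀ → LipschitzOnWith K x (Icc 0 τ) := by
  have h0 : (0:ℝ) ∈ Icc 0 T := ⟨le_rfl, hT⟩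
  obtain ⟨C₀, hC₀pos, hC₀⟩ := (hF.isCompact 0 h0 x₀).isBounded.exists_pos_norm_le
  set C := C₀ + L * T + L * R₀
  have hC : 0 ≤ C := by positivity
  set R := gronwallBound 0 L C T
  refine ⟨Real.toNNReal (C + L * R), fun τ hτT x v hsol hx0 =>
    hsol.lipschitzOnWith_of_ae_norm_le ?_⟩
  have hv : ∀ᵐ s ∂volume.restrict (Ioo 0 τ), ‖v s‖ ≤ C + L * ‖x s - x 0‖ := by
    filter_upwards [hsol.2.2, ae_restrict_mem measurableSet_Ioo] with s hvs hs
    have hsT : s ∈ Icc 0 T := ⟨hs.1.le, hs.2.le.trans hτT⟩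
    have hs0 : |s - 0| ≤ T := by rw [sub_zero, abs_of_pos hs.1]; exact hsT.2
    have hxs : ‖x s - x₀‖ ≤ ‖x s - x 0‖ + R₀ := by
      linarith [norm_sub_le_norm_sub_add_norm_sub (x s) (x 0) x₀]
    linarith [hF.norm_le hsT h0 hvs hC₀, mul_le_mul_of_nonneg_left hs0 hL,
      mul_le_mul_of_nonneg_left hxs hL]
  have hcont : ContinuousOn (fun t => ‖x t - x 0‖) (Icc 0 τ) :=
    (hsol.continuousOn.sub continuousOn_const).norm
  have hu : ∀ t ∈ Icc 0 τ, ‖x t - x 0‖ ≤ R := fun t ht => by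
    refine (le_gronwallBound_of_le_integral hL hcont (fun t ht => ?_) t ht).trans
      (gronwallBound_mono le_rfl hC hL (ht.2.trans hτT))
    have h0τ : (0:ℝ) ∈ Icc 0 τ := ⟨le_rfl, ht.1.trans ht.2⟩
    rw [hsol.sub_eq_integral h0τ ht]
    refine intervalIntegral.norm_integral_le_of_norm_le ht.1
      (uIoc_of_le ht.1 ▸ ae_mem_uIoc_of_ae_restrict_Ioo hv h0τ ht) ?_
    refine ContinuousOn.intervalIntegrable
      ((continuousOn_const.add (continuousOn_const.mul hcont)).mono ?_)
    rw [uIcc_of_le ht.1]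
    exact Icc_subset_Icc le_rfl ht.2
  filter_upwards [hv, ae_restrict_mem measurableSet_Ioo] with s hvs hs
  refine hvs.trans (le_trans ?_ (Real.le_coe_toNNReal _))
  linarith [mul_le_mul_of_nonneg_left (hu s ⟨hs.1.le, hs.2.le⟩) hL]

theorem SolOn.infDist_slope_le (hF : IsLipschitzCompactValued F T L)
    (hconv : ∀ t ∈ Icc (0:ℝ) T, ∀ x, Convex ℝ (F t x)) (hL : 0 ≤ L) {τ : ℝ}
    {x v : ℝ → Euc d} (h : SolOn F τ x v) (hτT : τ ≤ T) {K : ℝ≥0}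
    (hK : LipschitzOnWith K x (Icc 0 τ)) {s r : ℝ} (hs : 0 ≤ s) (hr : 0 < r)
    (hsr : s + r ≤ τ) (y : Euc d) :
    infDist (r⁻¹ • (x (s + r) - x s)) (F s y) ≤ L * (1 + K) * r + L * ‖x s - y‖ := by
  have hsτ : s ∈ Icc 0 τ := ⟨hs, by linarith⟩
  have hsrτ : s + r ∈ Icc 0 τ := ⟨by linarith, hsr⟩
  have hsT : s ∈ Icc 0 T := ⟨hs, hsτ.2.trans hτT⟩
  have hc : 0 ≤ L * (1 + K) * r + L * ‖x s - y‖ := by positivity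
  rw [← mem_cthickening_iff_infDist_le (hF.nonempty s hsT y) hc]
  have havg : r⁻¹ • (x (s + r) - x s) = ⨍ u in Ioc s (s + r), v u := by
    rw [setAverage_eq, Real.volume_real_Ioc_of_le (by linarith), add_sub_cancel_left,
      ← intervalIntegral.integral_of_le (by linarith), h.sub_eq_integral hsτ hsrτ]
  -- the slope is an average of velocities lying in the convex closed set `cthickening _ (F s y)`
  rw [havg]
  refine ((hconv s hsT y).cthickening _).set_average_mem isClosed_cthickening
    (by simp [hr]) measure_Ioc_lt_top.ne ?_ (h.intervalIntegrable hsτ hsrτ).1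
  have hmem := ae_mem_uIoc_of_ae_restrict_Ioo h.2.2 hsτ hsrτ
  rw [uIoc_of_le (by linarith)] at hmem
  rw [ae_restrict_iff' measurableSet_Ioc]
  filter_upwards [hmem] with u hvu hu
  have huτ : u ∈ Icc 0 τ := ⟨by linarith [hu.1], hu.2.trans hsr⟩
  have hus : |u - s| ≤ r := by rw [abs_of_pos (by linarith [hu.1])]; linarith [hu.2]
  have hxu : ‖x u - y‖ ≤ K * r + ‖x s - y‖ := by
    have := hK.dist_le_mul u huτ s hsτ
    rw [dist_eq_norm, Real.dist_eq] at this
    linarith [norm_sub_le_norm_sub_add_norm_sub (x u) (x s) y,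
      mul_le_mul_of_nonneg_left hus K.coe_nonneg]
  rw [mem_cthickening_iff_infDist_le (hF.nonempty s hsT y) hc]
  refine (hF.infDist_le ⟨huτ.1, huτ.2.trans hτT⟩ hsT (hvu hu)).trans ?_
  nlinarith [mul_le_mul_of_nonneg_left hus hL, mul_le_mul_of_nonneg_left hxu hL]

theorem IsLipschitzCompactValued.mem_of_hasDerivAt_of_tendsto
    (hF : IsLipschitzCompactValued F T L) (hconv : ∀ t ∈ Icc (0:ℝ) T, ∀ x, Convex ℝ (F t x))
    (hL : 0 ≤ L) {ι : Type*} {l : Filter ι} [l.NeBot] {τs : ι → ℝ} {b : ℝ}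
    (hτs : Tendsto τs l (𝓝 b)) (hτT : ∀ i, τs i ≤ T) {xs vs : ι → ℝ → Euc d}
    (hsol : ∀ i, SolOn F (τs i) (xs i) (vs i)) {K : ℝ≥0}
    (hlip : ∀ i, LipschitzOnWith K (xs i) (Icc 0 (τs i))) {y : ℝ → Euc d}
    (hy : ∀ t ∈ Ico 0 b, Tendsto (fun i => xs i t) l (𝓝 (y t))) {s : ℝ}
    (hs : s ∈ Ico 0 b) {w : Euc d} (hw : HasDerivAt y w s) : w ∈ F s (y s) := by
  have hsT : s ∈ Icc 0 T := ⟨hs.1, hs.2.le.trans (le_of_tendsto' hτs hτT)⟩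
  have hslope : ∀ r ∈ Ioo 0 (b - s),
      infDist (r⁻¹ • (y (s + r) - y s)) (F s (y s)) ≤ L * (1 + K) * r :=
    fun r hr => by
      have hsr : s + r ∈ Ico 0 b := ⟨by linarith [hs.1, hr.1], by linarith [hr.2]⟩
      have hbound : Tendsto (fun i => L * (1 + K) * r + L * ‖xs i s - y s‖) l
          (𝓝 (L * (1 + K) * r)) := by
        simpa using tendsto_const_nhds.add
          ((tendsto_iff_norm_sub_tendsto_zero.1 (hy s hs)).const_mul L)
      refine le_of_tendsto_of_tendsto
        ((continuous_infDist_pt _).continuousAt.tendsto.comp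
          (((hy _ hsr).sub (hy s hs)).const_smul r⁻¹)) hbound
        ((hτs.eventually (eventually_gt_nhds (by linarith [hr.2]))).mono fun i hi =>
          (hsol i).infDist_slope_le hF hconv hL (hτT i) (hlip i) hs.1 hr.1 hi.le (y s))
  have hzero : infDist w (F s (y s)) ≤ 0 :=
    le_of_tendsto_of_tendsto
      ((continuous_infDist_pt _).continuousAt.tendsto.comp hw.tendsto_slope_zero_right)
      (tendsto_nhdsWithin_of_tendsto_nhds (Continuous.tendsto' (by fun_prop) 0 0 (by simp)))
      (mem_of_superset (Ioo_mem_nhdsGT (by linarith [hs.2])) hslope)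
  exact ((hF.isCompact s hsT _).isClosed.mem_iff_infDist_zero (hF.nonempty s hsT _)).2
    (le_antisymm hzero infDist_nonneg)

theorem solOn_deriv_of_lipschitzWith {K : ℝ≥0} {y : ℝ → Euc d} (hy : LipschitzWith K y)
    {b : ℝ} (hmem : ∀ s ∈ Ioo 0 b, ∀ w, HasDerivAt y w s → w ∈ F s (y s)) :
    SolOn F b y (deriv y) := by
  refine ⟨(hy.intervalIntegrable_deriv 0 b).1.mono_set Ioo_subset_Ioc_self,
    fun t _ => by rw [hy.integral_deriv_eq_sub, add_sub_cancel], ?_⟩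
  filter_upwards [ae_restrict_of_ae hy.ae_differentiableAt_real,
    ae_restrict_mem measurableSet_Ioo] with s hd hs
  exact hmem s hs _ hd.hasDerivAt

theorem IsLipschitzCompactValued.Sc_nonempty_of_tendsto (hF : IsLipschitzCompactValued F T L)
    (hconv : ∀ t ∈ Icc (0:ℝ) T, ∀ x, Convex ℝ (F t x)) (hL : 0 ≤ L) {A : ℝ → Set (Euc d)}
    (hA : ∀ (ts : ℕ → ℝ) (t : ℝ) (xs : ℕ → Euc d) (xx : Euc d),
      (∀ n, ts n ∈ Icc (0:ℝ) T) → Tendsto ts atTop (𝓝 t) →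
      (∀ n, xs n ∈ A (ts n)) → Tendsto xs atTop (𝓝 xx) → xx ∈ A t)
    {X₀ : Set (Euc d)} (hX₀ : IsCompact X₀) {τs : ℕ → ℝ} {b : ℝ}
    (hτs : Tendsto τs atTop (𝓝 b)) (hτs0 : ∀ n, 0 ≤ τs n) (hτT : ∀ n, τs n ≤ T)
    {xs : ℕ → ℝ → Euc d} (hxs : ∀ n, xs n ∈ Sc F A X₀ (τs n)) {K : ℝ≥0}
    (hlip : ∀ n, LipschitzOnWith K (xs n) (Icc 0 (τs n))) : (Sc F A X₀ b).Nonempty := by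
  choose vs hvs using fun n => (hxs n).1.2
  set U := Ultrafilter.of (atTop : Filter ℕ)
  have hU : (U : Filter ℕ) ≤ atTop := Ultrafilter.of_le _
  have hτU : Tendsto τs U (𝓝 b) := hτs.mono_left hU
  have hcl : ∀ n t, max 0 (min (τs n) t) ∈ Icc 0 (τs n) := fun n t =>
    ⟨le_max_left _ _, max_le (hτs0 n) (min_le_left _ _)⟩
  have hcl_eq : ∀ n, ∀ t ∈ Icc 0 (τs n), max 0 (min (τs n) t) = t := fun n t ht => by
    rw [min_eq_right ht.2, max_eq_right ht.1]
  have hx0 : ∀ n, xs n (max 0 (min (τs n) 0)) ∈ X₀ := fun n => by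
    rw [hcl_eq n 0 ⟨le_rfl, hτs0 n⟩]
    exact (hxs n).1.1
  obtain ⟨y, hylip, hy⟩ := exists_lipschitzWith_tendsto_ultrafilter U
    (fun n => (hlip n).lipschitzWith_comp_clamp (hτs0 n)) 0 <|
      hX₀.isBounded.subset <| range_subset_iff.2 hx0
  refine ⟨y, ⟨hX₀.isClosed.mem_of_tendsto (hy 0) (Eventually.of_forall hx0), deriv y,
    solOn_deriv_of_lipschitzWith hylip fun s hs w hw => ?_⟩, fun t ht => ?_⟩
  · refine hF.mem_of_hasDerivAt_of_tendsto hconv hL hτU hτT hvs hlip (fun t ht => ?_)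
      ⟨hs.1.le, hs.2⟩ hw
    refine (hy t).congr' ((hτU.eventually (eventually_gt_nhds ht.2)).mono fun n hn => ?_)
    simp only [hcl_eq n t ⟨ht.1, hn.le⟩]
  · have hclt : Tendsto (fun n => max 0 (min (τs n) t)) U (𝓝 t) := by
      have := ((continuous_const.max (continuous_id.min continuous_const) :
        Continuous fun r => max 0 (min r t)).tendsto b).comp hτU
      rwa [min_eq_right ht.2, max_eq_right ht.1] at this
    obtain ⟨φ, -, hφ⟩ := Ultrafilter.exists_subseq_tendsto hU (hclt.prodMk_nhds (hy t))
    exact hA _ t _ _ (fun k => ⟨(hcl _ t).1, (hcl _ t).2.trans (hτT _)⟩)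
      ((continuous_fst.tendsto _).comp hφ) (fun k => (hxs _).2 _ (hcl _ t))
      ((continuous_snd.tendsto _).comp hφ)

end Solutions

theorem statement_5_general
    (d : ℕ) (T L : ℝ) (hT : 0 < T) (hL : 0 < L)
    (F : ℝ → Euc d → Set (Euc d))
    (hFne : ∀ t ∈ Icc (0:ℝ) T, ∀ x : Euc d, (F t x).Nonempty)
    (hFcvx : ∀ t ∈ Icc (0:ℝ) T, ∀ x : Euc d, Convex ℝ (F t x))
    (hFcpt : ∀ t ∈ Icc (0:ℝ) T, ∀ x : Euc d, IsCompact (F t x))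
    (hFlip : ∀ t ∈ Icc (0:ℝ) T, ∀ t' ∈ Icc (0:ℝ) T, ∀ x x' : Euc d,
      hausdorffDist (F t x) (F t' x') ≤ L * |t - t'| + L * ‖x - x'‖)
    (A : ℝ → Set (Euc d))
    (hAusc : ∀ (ts : ℕ → ℝ) (t : ℝ) (xs : ℕ → Euc d) (xx : Euc d),
      (∀ n, ts n ∈ Icc (0:ℝ) T) → Tendsto ts atTop (nhds t) →
      (∀ n, xs n ∈ A (ts n)) → Tendsto xs atTop (nhds xx) → xx ∈ A t)
    (X₀ : Set (Euc d)) (hX₀cpt : IsCompact X₀)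
    (hcompat : ∃ τ₀, 0 < τ₀ ∧ τ₀ ≤ T ∧ (Sc F A X₀ τ₀).Nonempty)
     :
    0 < tauStar F A X₀ T ∧ tauStar F A X₀ T ≤ T ∧
      (Sc F A X₀ (tauStar F A X₀ T)).Nonempty := by
  have hF : IsLipschitzCompactValued F T L := ⟨hFne, hFcpt, hFlip⟩
  obtain ⟨τ₀, hτ₀⟩ := hcompat
  set S := {τ : ℝ | 0 < τ ∧ τ ≤ T ∧ (Sc F A X₀ τ).Nonempty}
  change 0 < sSup S ∧ sSup S ≤ T ∧ (Sc F A X₀ (sSup S)).Nonempty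
  have hSbdd : BddAbove S := ⟨T, fun τ hτ => hτ.2.1⟩
  obtain ⟨τs, -, hτs, hτsS⟩ := exists_seq_tendsto_sSup ⟨τ₀, hτ₀⟩ hSbdd
  choose xs hxs using fun n => (hτsS n).2.2
  obtain ⟨R₀, hR₀, hX₀R₀⟩ := hX₀cpt.isBounded.exists_pos_norm_le
  obtain ⟨K, hK⟩ := hF.exists_lipschitzOnWith hL.le hT.le 0 hR₀.le
  have hlip : ∀ n, LipschitzOnWith K (xs n) (Icc 0 (τs n)) := fun n => by
    obtain ⟨⟨hx0, v, hsol⟩, -⟩ := hxs n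
    exact hK _ (hτsS n).2.1 _ _ hsol (by simpa using hX₀R₀ _ hx0)
  exact ⟨hτ₀.1.trans_le (le_csSup hSbdd hτ₀), csSup_le ⟨τ₀, hτ₀⟩ fun τ hτ => hτ.2.1,
    hF.Sc_nonempty_of_tendsto hFcvx hL.le hAusc hX₀cpt hτs (fun n => (hτsS n).1.le)
      (fun n => (hτsS n).2.1) hxs hlip⟩

theorem statement_5
    (d : ℕ) (hd : 1 ≤ d) (T L : ℝ) (hT : 0 < T) (hL : 0 < L)
    (F : ℝ → Euc d → Set (Euc d))
    (hFne : ∀ t ∈ Icc (0:ℝ) T, ∀ x : Euc d, (F t x).Nonempty)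
    (hFcvx : ∀ t ∈ Icc (0:ℝ) T, ∀ x : Euc d, Convex ℝ (F t x))
    (hFcpt : ∀ t ∈ Icc (0:ℝ) T, ∀ x : Euc d, IsCompact (F t x))
    (hFlip : ∀ t ∈ Icc (0:ℝ) T, ∀ t' ∈ Icc (0:ℝ) T, ∀ x x' : Euc d,
      hausdorffDist (F t x) (F t' x') ≤ L * |t - t'| + L * ‖x - x'‖)
    (A : ℝ → Set (Euc d))
    (hAcl : ∀ t ∈ Icc (0:ℝ) T, IsClosed (A t))
    (hAusc : ∀ (ts : ℕ → ℝ) (t : ℝ) (xs : ℕ → Euc d) (xx : Euc d),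
      (∀ n, ts n ∈ Icc (0:ℝ) T) → Tendsto ts atTop (nhds t) →
      (∀ n, xs n ∈ A (ts n)) → Tendsto xs atTop (nhds xx) → xx ∈ A t)
    (X₀ : Set (Euc d)) (hX₀ne : X₀.Nonempty) (hX₀cpt : IsCompact X₀)
    (hcompat : ∃ τ₀, 0 < τ₀ ∧ τ₀ ≤ T ∧ (Sc F A X₀ τ₀).Nonempty)
     :
    0 < tauStar F A X₀ T ∧ tauStar F A X₀ T ≤ T ∧
      (Sc F A X₀ (tauStar F A X₀ T)).Nonempty :=
  statement_5_general d T L hT hL F hFne hFcvx hFcpt hFlip A hAusc X₀ hX₀cpt hcompat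
end
end

section
/- (i) The function x(t) = (−sin t, cos t) is a constrained solution on [0,π]; (ii) for every τ > π there is no constrained solution on [0,τ]; (iii) for every h > 0 one has (0,1) + h·f(0,1) = (−h, 1) ∉ A, and consequently there is no sequence (y_n)_{n=0}^{ν} with ν ≥ 1, y_0 = (0,1), y_{n+1} = y_n + h·f(y_n) for 0 ≤ n ≤ ν−1, and y_n ∈ A for all 0 ≤ n ≤ ν. -/
open Set

noncomputable section

/-- the right-hand side `f(x₁,x₂) = (−x₂, x₁)` of Example 4.1. -/
def exF : ℝ × ℝ → ℝ × ℝ := fun p => (-p.2, p.1)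

/-- the constraint set `A = {x ∈ ℝ² : x₁² + x₂² = 1, x₁ ≤ 0}`. -/
def exA : Set (ℝ × ℝ) := {p : ℝ × ℝ | p.1 ^ 2 + p.2 ^ 2 = 1 ∧ p.1 ≤ 0}

/-- a constrained solution on `[0,τ]`: `x(0) = (0,1)`, `x'(t) = f(x(t))` and
`x(t) ∈ A` for all `t ∈ [0,τ]`. -/
def IsConstrainedSol (τ : ℝ) (x : ℝ → ℝ × ℝ) : Prop :=
  x 0 = (0, 1) ∧ (∀ t ∈ Icc (0:ℝ) τ, HasDerivAt x (exF (x t)) t) ∧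
    ∀ t ∈ Icc (0:ℝ) τ, x t ∈ exA

/-! The only solution of `x' = f(x)`, `x(0) = (0,1)` is `t ↦ (-sin t, cos t)`, which stays in the
left half-plane `x₁ ≤ 0` exactly while `sin t ≥ 0`, i.e. up to time `π`. An explicit Euler step
multiplies `x₁² + x₂²` by `1 + h²`, so it leaves the unit circle at once. -/

lemma isometry_exF : Isometry exF :=
  Isometry.of_dist_eq fun p q => by
    simp only [exF, Prod.dist_eq, Real.dist_eq, neg_sub_neg, abs_sub_comm p.2, max_comm]

lemma hasDerivAt_neg_sin_cos (t : ℝ) :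
    HasDerivAt (fun s => (-Real.sin s, Real.cos s)) (exF (-Real.sin t, Real.cos t)) t := by
  simpa [exF] using (Real.hasDerivAt_sin t).neg.prodMk (Real.hasDerivAt_cos t)

lemma eq_neg_sin_cos_of_hasDerivAt {τ : ℝ} {x : ℝ → ℝ × ℝ} (hx0 : x 0 = (0, 1))
    (hx : ∀ t ∈ Icc (0:ℝ) τ, HasDerivAt x (exF (x t)) t) :
    ∀ t ∈ Icc (0:ℝ) τ, x t = (-Real.sin t, Real.cos t) :=
  ODE_solution_unique (v := fun _ => exF) (fun _ => isometry_exF.lipschitz)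
    (fun t ht => (hx t ht).continuousAt.continuousWithinAt)
    (fun t ht => (hx t (Ico_subset_Icc_self ht)).hasDerivWithinAt)
    (fun t _ => (hasDerivAt_neg_sin_cos t).continuousAt.continuousWithinAt)
    (fun t _ => (hasDerivAt_neg_sin_cos t).hasDerivWithinAt)
    (by simp [hx0])

lemma neg_sin_cos_mem_exA_iff (t : ℝ) : (-Real.sin t, Real.cos t) ∈ exA ↔ 0 ≤ Real.sin t := by
  simp [exA, Real.sin_sq_add_cos_sq]

lemma isConstrainedSol_neg_sin_cos_pi :
    IsConstrainedSol Real.pi (fun t => (-Real.sin t, Real.cos t)) :=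
  ⟨by simp, fun t _ => hasDerivAt_neg_sin_cos t, fun t ht =>
    (neg_sin_cos_mem_exA_iff t).2 (Real.sin_nonneg_of_nonneg_of_le_pi ht.1 ht.2)⟩

lemma not_isConstrainedSol_of_pi_lt {τ : ℝ} (hτ : Real.pi < τ) (x : ℝ → ℝ × ℝ) :
    ¬ IsConstrainedSol τ x := by
  rintro ⟨hx0, hx, hxA⟩
  set t := min τ (3 * Real.pi / 2)
  have hπ := Real.pi_pos
  have hπt : Real.pi < t := lt_min hτ (by linarith)
  have ht2π : t < 2 * Real.pi := (min_le_right _ _).trans_lt (by linarith)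
  have ht : t ∈ Icc 0 τ := ⟨by linarith, min_le_left _ _⟩
  have hsin : 0 ≤ Real.sin t :=
    (neg_sin_cos_mem_exA_iff t).1 (eq_neg_sin_cos_of_hasDerivAt hx0 hx t ht ▸ hxA t ht)
  have hsin_sub : 0 < Real.sin (t - Real.pi) :=
    Real.sin_pos_of_pos_of_lt_pi (by linarith) (by linarith)
  rw [Real.sin_sub_pi] at hsin_sub
  linarith

lemma add_smul_exF (h : ℝ) (p : ℝ × ℝ) : p + h • exF p = (p.1 - h * p.2, p.2 + h * p.1) := by
  ext <;> simp [exF, sub_eq_add_neg]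

lemma add_smul_exF_notMem_exA {h : ℝ} (hh : h ≠ 0) {p : ℝ × ℝ} (hp : p ∈ exA) :
    p + h • exF p ∉ exA := by
  rintro ⟨hnorm, -⟩
  rw [add_smul_exF] at hnorm
  have : h ^ 2 * (p.1 ^ 2 + p.2 ^ 2) = 0 := by linear_combination hnorm - hp.1
  rw [hp.1, mul_one] at this
  exact hh (pow_eq_zero_iff two_ne_zero |>.1 this)

lemma zero_one_mem_exA : ((0:ℝ), (1:ℝ)) ∈ exA := by
  norm_num [exA]

theorem statement_13 :
    IsConstrainedSol Real.pi (fun t => (-Real.sin t, Real.cos t)) ∧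
    (∀ τ : ℝ, Real.pi < τ → ¬ ∃ x : ℝ → ℝ × ℝ, IsConstrainedSol τ x) ∧
    (∀ h : ℝ, 0 < h →
      (((0:ℝ), (1:ℝ)) + h • exF ((0:ℝ), (1:ℝ)) = (-h, 1) ∧
        ((-h, (1:ℝ)) : ℝ × ℝ) ∉ exA ∧
        ¬ ∃ (ν : ℕ) (y : ℕ → ℝ × ℝ), 1 ≤ ν ∧ y 0 = (0, 1) ∧
          (∀ n < ν, y (n + 1) = y n + h • exF (y n)) ∧ ∀ n ≤ ν, y n ∈ exA)) := by
  refine ⟨isConstrainedSol_neg_sin_cos_pi,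
    fun τ hτ ⟨x, hx⟩ => not_isConstrainedSol_of_pi_lt hτ x hx, fun h hh => ?_⟩
  have hstep : ((0:ℝ), (1:ℝ)) + h • exF ((0:ℝ), (1:ℝ)) = (-h, 1) := by simp [add_smul_exF]
  have hout := add_smul_exF_notMem_exA hh.ne' zero_one_mem_exA
  refine ⟨hstep, hstep ▸ hout, ?_⟩
  rintro ⟨ν, y, hν, hy0, hy, hyA⟩
  have hy1 : y 1 = ((0:ℝ), (1:ℝ)) + h • exF ((0:ℝ), (1:ℝ)) := hy0 ▸ hy 0 hν
  exact hout (hy1 ▸ hyA 1 hν)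

end
end

section
/- Let N ≥ 1 be an integer, β ≥ 0, P > 0 and 1 ≤ ν ≤ N, and let (y_n)_{n=0}^{ν} be a sequence in ℝ^d with y_{n+1} ∈ y_n + h_N·F(t_{N,n}, y_n) + B̄(0, β) for 0 ≤ n ≤ ν−1, and suppose ‖v‖ ≤ P for every 0 ≤ n ≤ ν−1 and every v ∈ F(t_{N,n}, y_n). Let y be the piecewise linear interpolation of (y_n). Then for every 0 ≤ n ≤ ν−1 and every t ∈ [t_{N,n}, t_{N,n+1}): ‖(y_{n+1} − y_n)/h_N‖ ≤ P + β/h_N, and dist((t, y(t), (y_{n+1} − y_n)/h_N), graph F) ≤ (1 + P + β/h_N)·h_N + β/h_N, where graph F = {(s,x,v) : s ∈ [0,T], v ∈ F(s,x)} and ℝ × ℝ^d × ℝ^d carries the norm |r| + ‖x‖ + ‖v‖. -/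
open MeasureTheory Metric Set Filter
open scoped RealInnerProductSpace

noncomputable section

section EulerStep

variable {E : Type*} [NormedAddCommGroup E] [NormedSpace ℝ E]
  {h β : ℝ} {x x' v : E}

lemma norm_inv_smul_sub_sub_le (hh : 0 < h) (hstep : ‖x' - (x + h • v)‖ ≤ β) :
    ‖h⁻¹ • (x' - x) - v‖ ≤ β / h := by
  have hslope : h⁻¹ • (x' - x) - v = h⁻¹ • (x' - (x + h • v)) := by
    simp only [smul_sub, smul_add, smul_smul, inv_mul_cancel₀ hh.ne', one_smul]
    abel
  rw [hslope, norm_smul, Real.norm_of_nonneg (inv_nonneg.2 hh.le), div_eq_inv_mul]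
  gcongr

lemma norm_inv_smul_sub_le (hh : 0 < h) (hstep : ‖x' - (x + h • v)‖ ≤ β) :
    ‖h⁻¹ • (x' - x)‖ ≤ ‖v‖ + β / h :=
  calc ‖h⁻¹ • (x' - x)‖ ≤ ‖h⁻¹ • (x' - x) - v‖ + ‖v‖ := norm_le_norm_sub_add _ _
    _ ≤ ‖v‖ + β / h := by linarith [norm_inv_smul_sub_sub_le hh hstep]

end EulerStep

lemma graphDist_le {d : ℕ} {F : ℝ → Euc d → Set (Euc d)} {T s : ℝ} (hs : s ∈ Icc 0 T)
    {x v : Euc d} (hv : v ∈ F s x) (p : ℝ × Euc d × Euc d) :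
    graphDist F T p ≤ |p.1 - s| + ‖p.2.1 - x‖ + ‖p.2.2 - v‖ :=
  csInf_le ⟨0, by rintro r ⟨s, -, x, v, -, rfl⟩; positivity⟩ ⟨s, hs, x, v, hv, rfl⟩

theorem statement_14_general
    (d : ℕ) (T : ℝ)
    (F : ℝ → Euc d → Set (Euc d))
    (N : ℕ) (β P : ℝ)
    (ν : ℕ) (hνN : ν ≤ N) (y : ℕ → Euc d)
    (hy : ∀ n < ν, ∃ v ∈ F ((n : ℝ) * (T / N)) (y n),
      ‖y (n + 1) - (y n + (T / N) • v)‖ ≤ β)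
    (hbd : ∀ n < ν, ∀ v ∈ F ((n : ℝ) * (T / N)) (y n), ‖v‖ ≤ P) :
    ∀ n < ν, ∀ t ∈ Ico ((n : ℝ) * (T / N)) (((n : ℝ) + 1) * (T / N)),
      ‖(T / N)⁻¹ • (y (n + 1) - y n)‖ ≤ P + β / (T / N) ∧
      graphDist F T
          (t, y n + (t - (n : ℝ) * (T / N)) • ((T / N)⁻¹ • (y (n + 1) - y n)),
            (T / N)⁻¹ • (y (n + 1) - y n)) ≤
        (1 + P + β / (T / N)) * (T / N) + β / (T / N) := by
  intro n hn t ⟨ht₀, ht₁⟩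
  set h := T / N with h_def
  set w := h⁻¹ • (y (n + 1) - y n)
  have hh : 0 < h := by linarith
  have hτ : 0 ≤ t - n * h ∧ t - n * h ≤ h := ⟨by linarith, by linarith⟩
  have hs : (n : ℝ) * h ∈ Icc 0 T := by
    have hnN : (n : ℝ) < N := by exact_mod_cast hn.trans_le hνN
    refine ⟨by positivity, ?_⟩
    calc (n : ℝ) * h ≤ N * h := by gcongr
      _ = T := by rw [h_def]; field_simp [(n.cast_nonneg.trans_lt hnN).ne']
  obtain ⟨v, hv, hstep⟩ := hy n hn
  have hw : ‖w‖ ≤ P + β / h := by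
    linarith [norm_inv_smul_sub_le hh hstep, hbd n hn v hv]
  refine ⟨hw, ?_⟩
  calc _ ≤ |t - n * h| + ‖(y n + (t - n * h) • w) - y n‖ + ‖w - v‖ := graphDist_le hs hv _
    _ ≤ h + h * (P + β / h) + β / h := by
      rw [add_sub_cancel_left, norm_smul, Real.norm_of_nonneg hτ.1, abs_of_nonneg hτ.1]
      gcongr
      · exact hτ.2
      · exact hτ.2
      · exact norm_inv_smul_sub_sub_le hh hstep
    _ = (1 + P + β / h) * h + β / h := by ring

theorem statement_14
    (d : ℕ) (hd : 1 ≤ d) (T L : ℝ) (hT : 0 < T) (hL : 0 < L)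
    (F : ℝ → Euc d → Set (Euc d))
    (hFne : ∀ t ∈ Icc (0:ℝ) T, ∀ x : Euc d, (F t x).Nonempty)
    (hFcvx : ∀ t ∈ Icc (0:ℝ) T, ∀ x : Euc d, Convex ℝ (F t x))
    (hFcpt : ∀ t ∈ Icc (0:ℝ) T, ∀ x : Euc d, IsCompact (F t x))
    (hFlip : ∀ t ∈ Icc (0:ℝ) T, ∀ t' ∈ Icc (0:ℝ) T, ∀ x x' : Euc d,
      hausdorffDist (F t x) (F t' x') ≤ L * |t - t'| + L * ‖x - x'‖)
    (N : ℕ) (hN : 1 ≤ N) (β P : ℝ) (hβ : 0 ≤ β) (hP : 0 < P)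
    (ν : ℕ) (hν1 : 1 ≤ ν) (hνN : ν ≤ N) (y : ℕ → Euc d)
    (hy : ∀ n < ν, ∃ v ∈ F ((n : ℝ) * (T / N)) (y n),
      ‖y (n + 1) - (y n + (T / N) • v)‖ ≤ β)
    (hbd : ∀ n < ν, ∀ v ∈ F ((n : ℝ) * (T / N)) (y n), ‖v‖ ≤ P) :
    ∀ n < ν, ∀ t ∈ Ico ((n : ℝ) * (T / N)) (((n : ℝ) + 1) * (T / N)),
      ‖(T / N)⁻¹ • (y (n + 1) - y n)‖ ≤ P + β / (T / N) ∧
      graphDist F T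
          (t, y n + (t - (n : ℝ) * (T / N)) • ((T / N)⁻¹ • (y (n + 1) - y n)),
            (T / N)⁻¹ • (y (n + 1) - y n)) ≤
        (1 + P + β / (T / N)) * (T / N) + β / (T / N) :=
  statement_14_general d T F N β P ν hνN y hy hbd
end
end

section
/- Let N ≥ 1 be an integer, P > 0, β_N = L(P+1)·h_N², and 1 ≤ ν ≤ N, and let (y_n)_{n=0}^{ν} be a sequence in ℝ^d with y_{n+1} ∈ y_n + h_N·F(t_{N,n}, y_n) + B̄(0, β_N) for 0 ≤ n ≤ ν−1, and suppose ‖v‖ ≤ P for every 0 ≤ n ≤ ν−1 and every v ∈ F(t_{N,n}, y_n). Let y be the piecewise linear interpolation of (y_n). Then for every 0 ≤ n ≤ ν−1 and every t ∈ [t_{N,n}, t_{N,n+1}): dist((y_{n+1} − y_n)/h_N, F(t, y(t))) ≤ L(P+1)·(2 + L·h_N)·h_N. -/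
open MeasureTheory Metric Set Filter
open scoped RealInnerProductSpace

noncomputable section

/-
The difference quotient `w = h⁻¹ (y₁ - y₀)` of an Euler step is within `c h` of the selection
`v ∈ G(s₀, y₀)` that produced it. Along the segment the interpolant moves by at most `h ‖w‖` and time
by at most `h`, so the Hausdorff-Lipschitz bound carries `v` to within `L h (1 + ‖w‖)` of
`G(t, y(t))`; with `‖w‖ ≤ P + c h` this gives the estimate, and `c = L (P + 1)` gives the constant.
-/

section EulerStep

variable {E : Type*} [NormedAddCommGroup E] [NormedSpace ℝ E]

lemma norm_inv_smul_sub_sub_le_s15 {h c : ℝ} (hh : 0 < h) {y₀ y₁ v : E}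
    (hstep : ‖y₁ - (y₀ + h • v)‖ ≤ c * h ^ 2) :
    ‖h⁻¹ • (y₁ - y₀) - v‖ ≤ c * h := by
  have hw : h⁻¹ • (y₁ - y₀) - v = h⁻¹ • (y₁ - (y₀ + h • v)) := by
    rw [smul_sub, smul_sub, smul_add, smul_smul, inv_mul_cancel₀ hh.ne', one_smul]
    abel
  rw [hw, norm_smul, Real.norm_of_nonneg (inv_nonneg.2 hh.le)]
  calc h⁻¹ * ‖y₁ - (y₀ + h • v)‖ ≤ h⁻¹ * (c * h ^ 2) := by gcongr
    _ = c * h := by field_simp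

theorem infDist_inv_smul_sub_le {G : ℝ → E → Set E} {h c L P s₀ t : ℝ} {y₀ y₁ v : E}
    (hh : 0 < h) (hL : 0 ≤ L) (ht : t ∈ Icc s₀ (s₀ + h))
    (hv : v ∈ G s₀ y₀) (hvP : ‖v‖ ≤ P) (hstep : ‖y₁ - (y₀ + h • v)‖ ≤ c * h ^ 2)
    (hfin : ∀ x, hausdorffEDist (G s₀ y₀) (G t x) ≠ ⊤)
    (hG : ∀ x, hausdorffDist (G s₀ y₀) (G t x) ≤ L * |s₀ - t| + L * ‖y₀ - x‖) :
    infDist (h⁻¹ • (y₁ - y₀)) (G t (y₀ + (t - s₀) • h⁻¹ • (y₁ - y₀))) ≤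
      c * h + L * h * (1 + P + c * h) := by
  set w := h⁻¹ • (y₁ - y₀)
  have hwv : ‖w - v‖ ≤ c * h := norm_inv_smul_sub_sub_le_s15 hh hstep
  have hw : ‖w‖ ≤ P + c * h := by
    calc ‖w‖ ≤ ‖v‖ + ‖w - v‖ := norm_le_norm_add_norm_sub' w v
      _ ≤ P + c * h := add_le_add hvP hwv
  have hts : |s₀ - t| ≤ h := by
    rw [abs_sub_comm, abs_of_nonneg (sub_nonneg.2 ht.1)]
    linarith [ht.2]
  have hdisp : ‖y₀ - (y₀ + (t - s₀) • w)‖ ≤ h * ‖w‖ := by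
    rw [sub_add_cancel_left, norm_neg, norm_smul, Real.norm_of_nonneg (sub_nonneg.2 ht.1)]
    gcongr
    linarith [ht.2]
  calc infDist w (G t (y₀ + (t - s₀) • w))
      ≤ infDist v (G t (y₀ + (t - s₀) • w)) + dist w v := infDist_le_infDist_add_dist
    _ ≤ hausdorffDist (G s₀ y₀) (G t (y₀ + (t - s₀) • w)) + ‖w - v‖ := by
        rw [dist_eq_norm]
        gcongr
        exact infDist_le_hausdorffDist_of_mem hv (hfin _)
    _ ≤ L * h + L * (h * (P + c * h)) + c * h := by
        gcongr
        refine (hG _).trans ?_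
        gcongr
        exact hdisp.trans (by gcongr)
    _ = c * h + L * h * (1 + P + c * h) := by ring

end EulerStep

theorem statement_15_general
    (d : ℕ) (T L : ℝ) (hT : 0 < T) (hL : 0 < L)
    (F : ℝ → Euc d → Set (Euc d))
    (hFne : ∀ t ∈ Icc (0:ℝ) T, ∀ x : Euc d, (F t x).Nonempty)
    (hFcpt : ∀ t ∈ Icc (0:ℝ) T, ∀ x : Euc d, IsCompact (F t x))
    (hFlip : ∀ t ∈ Icc (0:ℝ) T, ∀ t' ∈ Icc (0:ℝ) T, ∀ x x' : Euc d,
      hausdorffDist (F t x) (F t' x') ≤ L * |t - t'| + L * ‖x - x'‖)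
    (N : ℕ) (hN : 1 ≤ N) (P : ℝ)
    (ν : ℕ) (hνN : ν ≤ N) (y : ℕ → Euc d)
    (hy : ∀ n < ν, ∃ v ∈ F ((n : ℝ) * (T / N)) (y n),
      ‖y (n + 1) - (y n + (T / N) • v)‖ ≤ L * (P + 1) * (T / N) ^ 2)
    (hbd : ∀ n < ν, ∀ v ∈ F ((n : ℝ) * (T / N)) (y n), ‖v‖ ≤ P) :
    ∀ n < ν, ∀ t ∈ Ico ((n : ℝ) * (T / N)) (((n : ℝ) + 1) * (T / N)),
      infDist ((T / N)⁻¹ • (y (n + 1) - y n))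
          (F t (y n + (t - (n : ℝ) * (T / N)) • ((T / N)⁻¹ • (y (n + 1) - y n)))) ≤
        L * (P + 1) * (2 + L * (T / N)) * (T / N) := by
  intro n hn t ht
  have hh : 0 < T / N := div_pos hT (by exact_mod_cast hN)
  have hnN : ((n : ℝ) + 1) * (T / N) ≤ T := by
    calc ((n : ℝ) + 1) * (T / N) ≤ N * (T / N) := by
          gcongr
          exact_mod_cast Nat.succ_le_of_lt (hn.trans_le hνN)
      _ = T := mul_div_cancel₀ T (by positivity)
  have hs : (n : ℝ) * (T / N) ∈ Icc 0 T := ⟨by positivity, by linarith [ht.1, ht.2]⟩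
  have htT : t ∈ Icc 0 T := ⟨hs.1.trans ht.1, ht.2.le.trans hnN⟩
  have ht' : t ∈ Icc ((n : ℝ) * (T / N)) ((n : ℝ) * (T / N) + T / N) :=
    ⟨ht.1, by linarith [ht.2]⟩
  obtain ⟨v, hv, hstep⟩ := hy n hn
  refine (infDist_inv_smul_sub_le hh hL.le ht' hv (hbd n hn v hv) hstep (fun x => ?_)
    (fun x => hFlip _ hs _ htT _ x)).trans_eq (by ring)
  exact hausdorffEDist_ne_top_of_nonempty_of_bounded (hFne _ hs _) (hFne _ htT x)
    (hFcpt _ hs _).isBounded (hFcpt _ htT x).isBounded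

theorem statement_15
    (d : ℕ) (hd : 1 ≤ d) (T L : ℝ) (hT : 0 < T) (hL : 0 < L)
    (F : ℝ → Euc d → Set (Euc d))
    (hFne : ∀ t ∈ Icc (0:ℝ) T, ∀ x : Euc d, (F t x).Nonempty)
    (hFcvx : ∀ t ∈ Icc (0:ℝ) T, ∀ x : Euc d, Convex ℝ (F t x))
    (hFcpt : ∀ t ∈ Icc (0:ℝ) T, ∀ x : Euc d, IsCompact (F t x))
    (hFlip : ∀ t ∈ Icc (0:ℝ) T, ∀ t' ∈ Icc (0:ℝ) T, ∀ x x' : Euc d,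
      hausdorffDist (F t x) (F t' x') ≤ L * |t - t'| + L * ‖x - x'‖)
    (N : ℕ) (hN : 1 ≤ N) (P : ℝ) (hP : 0 < P)
    (ν : ℕ) (hν1 : 1 ≤ ν) (hνN : ν ≤ N) (y : ℕ → Euc d)
    (hy : ∀ n < ν, ∃ v ∈ F ((n : ℝ) * (T / N)) (y n),
      ‖y (n + 1) - (y n + (T / N) • v)‖ ≤ L * (P + 1) * (T / N) ^ 2)
    (hbd : ∀ n < ν, ∀ v ∈ F ((n : ℝ) * (T / N)) (y n), ‖v‖ ≤ P) :
    ∀ n < ν, ∀ t ∈ Ico ((n : ℝ) * (T / N)) (((n : ℝ) + 1) * (T / N)),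
      infDist ((T / N)⁻¹ • (y (n + 1) - y n))
          (F t (y n + (t - (n : ℝ) * (T / N)) • ((T / N)⁻¹ • (y (n + 1) - y n)))) ≤
        L * (P + 1) * (2 + L * (T / N)) * (T / N) :=
  statement_15_general d T L hT hL F hFne hFcpt hFlip N hN P ν hνN y hy hbd
end
end
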